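/- For every formula φ ∈ For_MBCL containing no occurrence of the connective → and all propositional variables p, q, φ is not logically equivalent to p→q: there exist a model M for MBCL and a world w of M such that exactly one of M,w ⊨ φ and M,w ⊨ p→q holds. -/
import Mathlib


/-- Formulas of MBCL: variables, negation, box, diamond, conjunction,
disjunction, connexive implication. -/
inductive MForm : Type
  | var : ℕ → MForm
  | neg : MForm → MForm
  | box : MForm → MForm
  | dia : MForm → MForm
  | conj : MForm → MForm → MForm
  | disj : MForm → MForm → MForm
  | imp : MForm → MForm → MForm
  deriving DecidableEq

/-- A model for MBCL: a nonempty set of worlds, an accessibility relation,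
a family of relating relations indexed by worlds, and a valuation. -/
structure MModel where
  W : Type
  ne : Nonempty W
  Q : W → W → Prop
  R : W → MForm → MForm → Prop
  v : W → ℕ → Bool

/-- Truth of a formula at a world of an MBCL model. -/
def msat (M : MModel) : M.W → MForm → Prop
  | w, .var p => M.v w p = true
  | w, .neg B => ¬ msat M w B
  | w, .box B => ∀ u, M.Q w u → msat M u B
  | w, .dia B => ∃ u, M.Q w u ∧ msat M u B
  | w, .conj B C => msat M w B ∧ msat M w C
  | w, .disj B C => msat M w B ∨ msat M w C
  | w, .imp B C => (¬ msat M w B ∨ msat M w C) ∧ M.R w B C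

def mcondA1 (R : MForm → MForm → Prop) : Prop := ∀ A, ¬ R A (.neg A)
def mcondA2 (R : MForm → MForm → Prop) : Prop := ∀ A, ¬ R (.neg A) A
def mcondB0 (R : MForm → MForm → Prop) : Prop := ∀ A B, R A B → ¬ R A (.neg B)
def mcondB1 (R : MForm → MForm → Prop) : Prop :=
  ∀ A B, R (.imp A B) (.neg (.imp A (.neg B)))
def mcondB2 (R : MForm → MForm → Prop) : Prop :=
  ∀ A B, R (.imp A (.neg B)) (.neg (.imp A B))
def mcondCUN (R : MForm → MForm → Prop) : Prop := ∀ A B, R A B → R (.neg A) (.neg B)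

/-- ¬^j A : the formula A prefixed by j negations. -/
def mnegs : ℕ → MForm → MForm
  | 0, A => A
  | n + 1, A => .neg (mnegs n A)

/-- φ contains no occurrence of the relating implication →. -/
def ArrowFree : MForm → Prop
  | .var _ => True
  | .neg A => ArrowFree A
  | .box A => ArrowFree A
  | .dia A => ArrowFree A
  | .conj A B => ArrowFree A ∧ ArrowFree B
  | .disj A B => ArrowFree A ∧ ArrowFree B
  | .imp _ _ => False


def M1 : MModel := ⟨Unit, ⟨()⟩, fun _ _ => False, fun _ _ _ => True, fun _ _ => true⟩
def M2 : MModel := ⟨Unit, ⟨()⟩, fun _ _ => False, fun _ _ _ => False, fun _ _ => true⟩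

lemma msat_agree (φ : MForm) (hφ : ArrowFree φ) (w : Unit) :
    msat M1 w φ ↔ msat M2 w φ := by
  induction φ with
  | var n => simp [msat, M1, M2]
  | neg A ih => simp only [msat]; exact not_congr (ih hφ)
  | box A ih =>
      simp only [msat]
      exact forall_congr' fun u => imp_congr Iff.rfl (ih hφ)
  | dia A ih =>
      simp only [msat]
      exact exists_congr fun u => and_congr Iff.rfl (ih hφ)
  | conj A B ihA ihB => exact and_congr (ihA hφ.1) (ihB hφ.2)
  | disj A B ihA ihB => exact or_congr (ihA hφ.1) (ihB hφ.2)
  | imp A B _ _ => exact absurd hφ id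

/-- No →-free formula is logically equivalent to p→q: some model and world
distinguish them (exactly one of the two is true there). -/
theorem arrow_not_definable (φ : MForm) (hφ : ArrowFree φ) (p q : ℕ) :
    ∃ (M : MModel) (w : M.W),
      Xor' (msat M w φ) (msat M w (.imp (.var p) (.var q))) := by
  by_cases h : msat M1 () φ
  · refine ⟨M2, (), Or.inl ⟨(msat_agree φ hφ ()).mp h, ?_⟩⟩
    simp [msat, M2]
  · refine ⟨M1, (), Or.inr ⟨⟨Or.inr rfl, trivial⟩, h⟩⟩
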